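/- Let a_1 ≤ a_2 ≤ ... ≤ a_n be nonnegative reals sorted in non-decreasing order, let b ∈ ℝ with a_{n-1} + a_n > b, and let φ be the smallest index such that a_φ + a_{φ+1} > b. Then the clique {φ, ..., n} is maximal in the conflict graph of the knapsack constraint ∑_{j=1}^n a_j x_j ≤ b: for every index i < φ, the binary vector with x_i = x_φ = 1 and all other entries 0 satisfies the constraint, so i is not in conflict with φ and the clique cannot be enlarged by any index outside it. -/
import Mathlib


/-- Clique Detection, maximality of the original clique.  With `a` nonnegative sorted
non-decreasing, the two largest coefficients exceeding `b`, and `φ` the smallest index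
with `a φ + a (φ+1) > b`, the clique `{φ, ..., n-1}` is maximal: for every index
`i < φ`, the binary vector with `x i = x φ = 1` and all other entries `0` satisfies
the knapsack constraint, so `i` is not in conflict with `φ` and the clique cannot be
enlarged by any index outside it. -/
theorem cliqueDetection_original_clique_maximal (n : ℕ) (hn : 2 ≤ n)
    (a : Fin n → ℝ) (b : ℝ)
    (ha0 : ∀ j, 0 ≤ a j) (hmono : Monotone a)
    (hlast : b < a ⟨n - 2, by omega⟩ + a ⟨n - 1, by omega⟩)
    (φ : Fin n) (hφ1 : φ.val + 1 < n)
    (hφ : b < a φ + a ⟨φ.val + 1, hφ1⟩)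
    (hφmin : ∀ ψ : Fin n, ∀ hψ : ψ.val + 1 < n,
      b < a ψ + a ⟨ψ.val + 1, hψ⟩ → φ ≤ ψ) :
    ∀ i : Fin n, i < φ →
      (∑ t, a t * (if t = i ∨ t = φ then (1 : ℝ) else 0)) ≤ b ∧
      ¬ (∀ x : Fin n → ℝ, (∀ t, x t = 0 ∨ x t = 1) → ∑ t, a t * x t ≤ b →
          ¬ (x i = 1 ∧ x φ = 1)) := by
  intro i hiφ
  have hine : i ≠ φ := ne_of_lt hiφ
  -- φ ≥ 1, consider ψ = φ - 1
  have hφpos : 0 < φ.val := by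
    rcases Nat.eq_zero_or_pos φ.val with h | h
    · exact absurd (Fin.lt_iff_val_lt_val.mp hiφ) (by omega)
    · exact h
  have hψlt : φ.val - 1 < n := by omega
  have hψ1 : (φ.val - 1) + 1 < n := by omega
  have hprev : ¬ b < a ⟨φ.val - 1, hψlt⟩ + a ⟨(φ.val - 1) + 1, hψ1⟩ := by
    intro h
    have := hφmin ⟨φ.val - 1, hψlt⟩ hψ1 h
    simp [Fin.le_iff_val_le_val] at this
    omega
  push_neg at hprev
  have hprev' : a ⟨φ.val - 1, hψlt⟩ + a φ ≤ b := by
    have : (⟨(φ.val - 1) + 1, hψ1⟩ : Fin n) = φ := by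
      ext; simp; omega
    rwa [this] at hprev
  have hiprev : a i ≤ a ⟨φ.val - 1, hψlt⟩ := by
    apply hmono
    simp [Fin.le_iff_val_le_val]
    have := Fin.lt_iff_val_lt_val.mp hiφ
    omega
  have hsum : (∑ t, a t * (if t = i ∨ t = φ then (1 : ℝ) else 0)) = a i + a φ := by
    have : ∀ t : Fin n, a t * (if t = i ∨ t = φ then (1 : ℝ) else 0)
        = (if t = i then a t else 0) + (if t = φ then a t else 0) := by
      intro t
      by_cases h1 : t = i <;> by_cases h2 : t = φ <;> simp [h1, h2] at * <;> tauto
    rw [Finset.sum_congr rfl (fun t _ => this t), Finset.sum_add_distrib]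
    simp
  have hle : a i + a φ ≤ b := le_trans (by linarith) hprev'
  constructor
  · rw [hsum]; exact hle
  · intro h
    apply h (fun t => if t = i ∨ t = φ then (1 : ℝ) else 0)
    · intro t; by_cases ht : t = i ∨ t = φ <;> simp [ht]
    · rw [hsum]; exact hle
    · constructor <;> simp [hine]
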